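/- arXiv:2405.02235 — 6 statements merged into one kernel-verified Lean document; each statement's English description precedes it below -/
import Mathlib

section
/- Let L > 0, σ > 0 with √3 σ ≤ 1/L. Define f as in the tent-function construction: f(x) = 0 for x < -1/L or x > 2/L, f(x) = Lx + 1 for -1/L ≤ x < 0, f(x) = 1 - (L/2)x for 0 ≤ x ≤ 2/L. Let ψ_σ be the uniform density on [-√3 σ, √3 σ] and let f_σ = f * ψ_σ be the convolution. Then the maximizer of f is x* = 0, the maximizer of f_σ is x*_σ = σ/√3, and f(x*) - f(x*_σ) = Lσ/(2√3). -/
open MeasureTheory Real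

/-!
Write `s = √3 σ`. Then `f_σ(x)` is the mean of `f` over `[x - s, x + s]`, so
`f_σ'(x) = (f(x + s) - f(x - s)) / (2 s)`. The rising branch `L y + 1` at `y = x - s` lies below the
falling branch `1 - L y / 2` at `y = x + s` exactly when `3 x ≤ s`, so `f_σ` increases up to
`s / 3 = σ / √3` and decreases after it. The gap is then read off the falling branch, which
`σ / √3 ≤ 1 / (3 L)` does not leave.
-/

noncomputable def tent (L x : ℝ) : ℝ := max 0 (min (L * x + 1) (1 - L / 2 * x))

lemma tent_eq_ite {L : ℝ} (hL : 0 < L) (x : ℝ) :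
    tent L x = if x < -1 / L ∨ x > 2 / L then 0 else if x < 0 then L * x + 1 else 1 - L / 2 * x := by
  simp only [tent, lt_div_iff₀ hL, gt_iff_lt, div_lt_iff₀ hL]
  split_ifs with hout hneg
  · rcases hout with h | h
    · exact max_eq_left ((min_le_left _ _).trans (by linarith))
    · exact max_eq_left ((min_le_right _ _).trans (by linarith))
  · push Not at hout
    rw [min_eq_left (by nlinarith), max_eq_right (by linarith)]
  · push Not at hout hneg
    rw [min_eq_right (by nlinarith), max_eq_right (by linarith)]

lemma continuous_tent (L : ℝ) : Continuous (tent L) := by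
  unfold tent
  fun_prop

lemma tent_zero (L : ℝ) : tent L 0 = 1 := by
  norm_num [tent]

lemma tent_le_one {L : ℝ} (hL : 0 ≤ L) (x : ℝ) : tent L x ≤ 1 := by
  refine max_le zero_le_one ?_
  rcases le_total x 0 with hx | hx
  · exact (min_le_left _ _).trans (by nlinarith)
  · exact (min_le_right _ _).trans (by nlinarith)

lemma tent_of_nonneg_of_mul_le_two {L x : ℝ} (hL : 0 ≤ L) (hx : 0 ≤ x) (hLx : L * x ≤ 2) :
    tent L x = 1 - L / 2 * x := by
  have hLx' : 0 ≤ L * x := mul_nonneg hL hx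
  rw [tent, min_eq_right (by nlinarith), max_eq_right (by linarith)]

lemma tent_sub_le_tent_add {L s x : ℝ} (hL : 0 ≤ L) (hs : 0 ≤ s) (hx : 3 * x ≤ s) :
    tent L (x - s) ≤ tent L (x + s) := by
  refine max_le_max le_rfl (le_min ?_ ?_) <;> refine (min_le_left _ _).trans ?_
  · nlinarith
  · nlinarith [mul_nonneg hL (show 0 ≤ s - 3 * x by linarith)]

lemma tent_add_le_tent_sub {L s x : ℝ} (hL : 0 ≤ L) (hs : 0 ≤ s) (hx : s ≤ 3 * x) :
    tent L (x + s) ≤ tent L (x - s) := by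
  refine max_le_max le_rfl (le_min ?_ ?_) <;> refine (min_le_right _ _).trans ?_
  · nlinarith [mul_nonneg hL (show 0 ≤ 3 * x - s by linarith)]
  · nlinarith

lemma integral_ite_window_mul (g : ℝ → ℝ) {s : ℝ} (hs : 0 ≤ s) (c x : ℝ) :
    ∫ t, (if -s ≤ x - t ∧ x - t ≤ s then c else 0) * g t = c * ∫ t in (x - s)..(x + s), g t := by
  have hind : (fun t => (if -s ≤ x - t ∧ x - t ≤ s then c else 0) * g t)
      = Set.indicator (Set.Icc (x - s) (x + s)) (fun t => c * g t) := by
    ext t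
    by_cases ht : t ∈ Set.Icc (x - s) (x + s)
    · rw [Set.indicator_of_mem ht, if_pos (by constructor <;> linarith [ht.1, ht.2])]
    · rw [Set.indicator_of_notMem ht, if_neg, zero_mul]
      exact fun h => ht ⟨by linarith [h.2], by linarith [h.1]⟩
  rw [hind, integral_indicator measurableSet_Icc, integral_Icc_eq_integral_Ioc,
    ← intervalIntegral.integral_of_le (by linarith), intervalIntegral.integral_const_mul]

lemma hasDerivAt_integral_window {g : ℝ → ℝ} (hg : Continuous g) (s x : ℝ) :
    HasDerivAt (fun y => ∫ t in (y - s)..(y + s), g t) (g (x + s) - g (x - s)) x := by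
  have hprim : ∀ a, HasDerivAt (fun u => ∫ t in (0 : ℝ)..u, g t) (g a) a :=
    fun a => (hg.integral_hasStrictDerivAt 0 a).hasDerivAt
  have hright := (hprim (x + s)).comp x ((hasDerivAt_id x).add_const s)
  have hleft := (hprim (x - s)).comp x ((hasDerivAt_id x).sub_const s)
  simp only [mul_one] at hright hleft
  refine (hright.sub hleft).congr_of_eventuallyEq (Filter.Eventually.of_forall fun y => ?_)
  exact (intervalIntegral.integral_interval_sub_left (hg.intervalIntegrable _ _)
    (hg.intervalIntegrable _ _)).symm

lemma le_of_hasDerivAt_nonneg_of_nonpos {g g' : ℝ → ℝ} {c : ℝ} (hg : ∀ x, HasDerivAt g (g' x) x)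
    (hinc : ∀ x < c, 0 ≤ g' x) (hdec : ∀ x, c < x → g' x ≤ 0) (x : ℝ) : g x ≤ g c := by
  have hcont : Continuous g := continuous_iff_continuousAt.2 fun x => (hg x).continuousAt
  rcases le_total x c with hx | hx
  · refine monotoneOn_of_hasDerivWithinAt_nonneg (convex_Iic c) hcont.continuousOn
      (fun y _ => (hg y).hasDerivWithinAt) (fun y hy => hinc y ?_) hx (Set.mem_Iic.2 le_rfl) hx
    rwa [interior_Iic] at hy
  · refine antitoneOn_of_hasDerivWithinAt_nonpos (convex_Ici c) hcont.continuousOn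
      (fun y _ => (hg y).hasDerivWithinAt) (fun y hy => hdec y ?_) (Set.mem_Ici.2 le_rfl) hx hx
    rwa [interior_Ici] at hy

/-- For the tent function `f` with Lipschitz constant `L`, and the uniform noise density
`ψ_σ` on `[-√3 σ, √3 σ]` with `√3 σ ≤ 1/L`, the maximizer of `f` is `x* = 0`, the
maximizer of the smoothed function `f_σ = f * ψ_σ` is `x*_σ = σ/√3`, and
`f(x*) - f(x*_σ) = L σ / (2 √3)`. -/
theorem stmt_2 (L σ : ℝ) (hL : 0 < L) (hσ : 0 < σ) (hσL : Real.sqrt 3 * σ ≤ 1 / L)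
    (f ψ fσ : ℝ → ℝ)
    (hf : ∀ x : ℝ, f x =
      if x < -1 / L ∨ x > 2 / L then 0
      else if x < 0 then L * x + 1
      else 1 - L / 2 * x)
    (hψ : ∀ x : ℝ, ψ x =
      if -(Real.sqrt 3 * σ) ≤ x ∧ x ≤ Real.sqrt 3 * σ then 1 / (2 * Real.sqrt 3 * σ) else 0)
    (hfσ : ∀ x : ℝ, fσ x = ∫ t : ℝ, ψ (x - t) * f t) :
    (∀ x : ℝ, f x ≤ f 0) ∧ (∀ x : ℝ, fσ x ≤ fσ (σ / Real.sqrt 3)) ∧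
      f 0 - f (σ / Real.sqrt 3) = L * σ / (2 * Real.sqrt 3) := by
  have h3 : Real.sqrt 3 ^ 2 = 3 := Real.sq_sqrt (by norm_num)
  set s := Real.sqrt 3 * σ with hs_def
  have hs : 0 < s := by positivity
  have hf_eq : f = tent L := funext fun x => (hf x).trans (tent_eq_ite hL x).symm
  have hmean : ∀ x, fσ x = 1 / (2 * Real.sqrt 3 * σ) *
      ∫ t in (x - s)..(x + s), tent L t := fun x => by
    simp only [hfσ, hψ, hf_eq, integral_ite_window_mul _ hs.le]
  have hderiv : ∀ x, HasDerivAt fσ (1 / (2 * Real.sqrt 3 * σ) *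
      (tent L (x + s) - tent L (x - s))) x := fun x =>
    (funext hmean ▸ (hasDerivAt_integral_window (continuous_tent L) _ x).const_mul _)
  have hpeak : 3 * (σ / Real.sqrt 3) = s := by
    rw [hs_def]
    field_simp
    linarith
  have hpeak_le : L * (σ / Real.sqrt 3) ≤ 2 := by
    rw [le_div_iff₀ hL] at hσL
    nlinarith
  refine ⟨fun x => hf_eq ▸ tent_zero L ▸ tent_le_one hL.le x, ?_, ?_⟩
  · refine le_of_hasDerivAt_nonneg_of_nonpos hderiv (fun x hx => ?_) (fun x hx => ?_)
    · exact mul_nonneg (by positivity) (sub_nonneg.2 (tent_sub_le_tent_add hL.le hs.le (by linarith)))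
    · exact mul_nonpos_of_nonneg_of_nonpos (by positivity)
        (sub_nonpos.2 (tent_add_le_tent_sub hL.le hs.le (by linarith)))
  · rw [hf_eq, tent_zero, tent_of_nonneg_of_mul_le_two hL.le (by positivity) hpeak_le]
    field_simp
    ring
end

section
/- Let Θ = ℝ^d, let J_D : Θ → ℝ be L_J-Lipschitz continuous with a maximizer θ*, let Φ be a probability distribution on ℝ^d with mean 0 and E[‖ε‖₂²] ≤ d σ², and define J_P(θ) = E_{ε∼Φ}[J_D(θ + ε)]. If θ*_P is a maximizer of J_P, then J_D(θ*) - J_D(θ*_P) ≤ 2 L_J √d σ. -/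
/-! Since `E‖ε‖ ≤ √(E‖ε‖²) ≤ √d σ`, averaging the `L`-Lipschitz `J_D` over shifts by `ε` moves
it by at most `L √d σ` everywhere. Comparing `J_D` with `J_P` at `θ*` and at `θ*_P`, and using
`J_P(θ*) ≤ J_P(θ*_P)` in between, costs this uniform gap twice. -/

open MeasureTheory ProbabilityTheory

lemma sq_integral_le_integral_sq {Ω : Type*} [MeasurableSpace Ω] {μ : Measure Ω}
    [IsProbabilityMeasure μ] {X : Ω → ℝ} (hX : MemLp X 2 μ) :
    (∫ ω, X ω ∂μ) ^ 2 ≤ ∫ ω, X ω ^ 2 ∂μ := by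
  have h := variance_nonneg X μ
  rw [variance_eq_sub hX] at h
  simpa using h

section NormMoments

variable {E : Type*} [NormedAddCommGroup E] [MeasurableSpace E] [OpensMeasurableSpace E]
  {μ : Measure E}

lemma memLp_norm_two_of_integrable_norm_sq (h : Integrable (fun x : E => ‖x‖ ^ 2) μ) :
    MemLp (fun x : E => ‖x‖) 2 μ :=
  (memLp_two_iff_integrable_sq continuous_norm.aestronglyMeasurable).mpr h

lemma integrable_norm_of_integrable_norm_sq [IsFiniteMeasure μ]
    (h : Integrable (fun x : E => ‖x‖ ^ 2) μ) : Integrable (fun x : E => ‖x‖) μ :=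
  (memLp_norm_two_of_integrable_norm_sq h).integrable one_le_two

lemma integral_norm_le_sqrt_integral_norm_sq [IsProbabilityMeasure μ]
    (h : Integrable (fun x : E => ‖x‖ ^ 2) μ) :
    ∫ x, ‖x‖ ∂μ ≤ √(∫ x, ‖x‖ ^ 2 ∂μ) :=
  (le_abs_self _).trans
    (Real.abs_le_sqrt (sq_integral_le_integral_sq (memLp_norm_two_of_integrable_norm_sq h)))

end NormMoments

lemma abs_sub_integral_comp_add_le {E : Type*} [NormedAddCommGroup E] [MeasurableSpace E]
    {μ : Measure E} [IsProbabilityMeasure μ] {J : E → ℝ} {L : ℝ}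
    (hJ : ∀ x y, |J x - J y| ≤ L * ‖x - y‖) (x : E)
    (hint : Integrable (fun ε => J (x + ε)) μ) (hnorm : Integrable (fun ε : E => ‖ε‖) μ) :
    |J x - ∫ ε, J (x + ε) ∂μ| ≤ L * ∫ ε, ‖ε‖ ∂μ := by
  have hsub : J x - ∫ ε, J (x + ε) ∂μ = ∫ ε, (J x - J (x + ε)) ∂μ := by
    rw [integral_sub (integrable_const _) hint, integral_const, probReal_univ, one_smul]
  calc |J x - ∫ ε, J (x + ε) ∂μ|
      ≤ ∫ ε, |J x - J (x + ε)| ∂μ := hsub ▸ abs_integral_le_integral_abs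
    _ ≤ ∫ ε, L * ‖ε‖ ∂μ := by
        refine integral_mono ((integrable_const _).sub hint).abs (hnorm.const_mul L) fun ε => ?_
        simpa using hJ x (x + ε)
    _ = L * ∫ ε, ‖ε‖ ∂μ := integral_const_mul L _

lemma sub_le_two_mul_of_forall_abs_sub_le {α : Type*} {f g : α → ℝ} {c : ℝ}
    (hfg : ∀ x, |f x - g x| ≤ c) {xmax : α} (hmax : ∀ x, g x ≤ g xmax) (x : α) :
    f x - f xmax ≤ 2 * c := by
  have hx := (abs_le.mp (hfg x)).2
  have hxmax := (abs_le.mp (hfg xmax)).1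
  linarith [hmax x]

theorem stmt_4_general (d : ℕ) (L σ : ℝ) (hL : 0 ≤ L) (hσ : 0 < σ)
    (JD JP : EuclideanSpace ℝ (Fin d) → ℝ)
    (hLip : ∀ θ θ' : EuclideanSpace ℝ (Fin d), |JD θ - JD θ'| ≤ L * ‖θ - θ'‖)
    (Φ : Measure (EuclideanSpace ℝ (Fin d))) [IsProbabilityMeasure Φ]
    (hint2 : Integrable (fun ε => ‖ε‖ ^ 2) Φ)
    (hvar : (∫ ε, ‖ε‖ ^ 2 ∂Φ) ≤ (d : ℝ) * σ ^ 2)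
    (hintJ : ∀ θ, Integrable (fun ε => JD (θ + ε)) Φ)
    (hJP : ∀ θ, JP θ = ∫ ε, JD (θ + ε) ∂Φ)
    (θstar θP : EuclideanSpace ℝ (Fin d))
    (hθP : ∀ θ, JP θ ≤ JP θP) :
    JD θstar - JD θP ≤ 2 * L * Real.sqrt d * σ := by
  have hmean_norm : ∫ ε, ‖ε‖ ∂Φ ≤ √d * σ :=
    calc ∫ ε, ‖ε‖ ∂Φ ≤ √(∫ ε, ‖ε‖ ^ 2 ∂Φ) := integral_norm_le_sqrt_integral_norm_sq hint2
      _ ≤ √(d * σ ^ 2) := Real.sqrt_le_sqrt hvar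
      _ = √d * σ := by rw [Real.sqrt_mul (Nat.cast_nonneg d), Real.sqrt_sq hσ.le]
  have hgap : ∀ θ, |JD θ - JP θ| ≤ L * (√d * σ) := fun θ =>
    hJP θ ▸ (abs_sub_integral_comp_add_le hLip θ (hintJ θ)
      (integrable_norm_of_integrable_norm_sq hint2)).trans (mul_le_mul_of_nonneg_left hmean_norm hL)
  have h := sub_le_two_mul_of_forall_abs_sub_le hgap hθP θstar
  linarith

/-- If `θ*` maximizes the `L_J`-Lipschitz objective `J_D` and `θ*_P` maximizes the smoothed
objective `J_P(θ) = E_{ε∼Φ}[J_D(θ+ε)]` (with zero-mean noise and `E[‖ε‖²] ≤ d σ²`), then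
`J_D(θ*) - J_D(θ*_P) ≤ 2 L_J √d σ`. -/
theorem stmt_4 (d : ℕ) (L σ : ℝ) (hL : 0 ≤ L) (hσ : 0 < σ)
    (JD JP : EuclideanSpace ℝ (Fin d) → ℝ)
    (hLip : ∀ θ θ' : EuclideanSpace ℝ (Fin d), |JD θ - JD θ'| ≤ L * ‖θ - θ'‖)
    (Φ : Measure (EuclideanSpace ℝ (Fin d))) [IsProbabilityMeasure Φ]
    (hmean : (∫ ε, ε ∂Φ) = 0)
    (hint2 : Integrable (fun ε => ‖ε‖ ^ 2) Φ)
    (hvar : (∫ ε, ‖ε‖ ^ 2 ∂Φ) ≤ (d : ℝ) * σ ^ 2)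
    (hintJ : ∀ θ, Integrable (fun ε => JD (θ + ε)) Φ)
    (hJP : ∀ θ, JP θ = ∫ ε, JD (θ + ε) ∂Φ)
    (θstar θP : EuclideanSpace ℝ (Fin d))
    (hθstar : ∀ θ, JD θ ≤ JD θstar)
    (hθP : ∀ θ, JP θ ≤ JP θP) :
    JD θstar - JD θP ≤ 2 * L * Real.sqrt d * σ :=
  stmt_4_general d L σ hL hσ JD JP hLip Φ hint2 hvar hintJ hJP θstar θP hθP
end

section
/- Let J : ℝ^d → ℝ satisfy the (α, β)-weak gradient domination property J* - J(θ) ≤ α ‖∇J(θ)‖₂ + β for all θ, where J* = sup_θ J(θ). Suppose additionally J is L₂-smooth (‖∇²J‖₂ ≤ L₂ everywhere). Let Φ be a probability distribution on ℝ^d with mean 0 and E[‖ε‖₂²] ≤ d σ², and define J_P(θ) = E_{ε∼Φ}[J(θ + ε)]. Then for every θ, J* - J(θ) ≤ α ‖∇J_P(θ)‖₂ + β + α L₂ σ √d. -/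
open MeasureTheory

/-- If `J` satisfies `(α,β)`-weak gradient domination and is `L₂`-smooth, and
`J_P(θ) = E_{ε∼Φ}[J(θ+ε)]` with zero-mean noise satisfying `E[‖ε‖²] ≤ d σ²`, then
`J* - J(θ) ≤ α ‖∇J_P(θ)‖ + β + α L₂ σ √d` for every `θ`. -/
theorem stmt_11 (d : ℕ) (α β L₂ σ Jstar : ℝ) (hα : 0 < α) (hβ : 0 ≤ β)
    (hL₂ : 0 ≤ L₂) (hσ : 0 < σ)
    (J JP : EuclideanSpace ℝ (Fin d) → ℝ)
    (hJ : ContDiff ℝ 2 J)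
    (hsup : ∀ θ, J θ ≤ Jstar)
    (hwgd : ∀ θ, Jstar - J θ ≤ α * ‖gradient J θ‖ + β)
    (hsmooth : ∀ θ θ' : EuclideanSpace ℝ (Fin d),
      ‖gradient J θ - gradient J θ'‖ ≤ L₂ * ‖θ - θ'‖)
    (Φ : Measure (EuclideanSpace ℝ (Fin d))) [IsProbabilityMeasure Φ]
    (hmean : (∫ ε, ε ∂Φ) = 0)
    (hint2 : Integrable (fun ε => ‖ε‖ ^ 2) Φ)
    (hvar : (∫ ε, ‖ε‖ ^ 2 ∂Φ) ≤ (d : ℝ) * σ ^ 2)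
    (hintJ : ∀ θ, Integrable (fun ε => J (θ + ε)) Φ)
    (hintg : ∀ θ, Integrable (fun ε => gradient J (θ + ε)) Φ)
    (hJP : ∀ θ, JP θ = ∫ ε, J (θ + ε) ∂Φ)
    (hgradJP : ∀ θ, gradient JP θ = ∫ ε, gradient J (θ + ε) ∂Φ) :
    ∀ θ : EuclideanSpace ℝ (Fin d),
      Jstar - J θ ≤ α * ‖gradient JP θ‖ + β + α * L₂ * σ * Real.sqrt d := by
  intro θ
  -- integrability of ‖ε‖
  have hn : Integrable (fun ε : EuclideanSpace ℝ (Fin d) => ‖ε‖) Φ := by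
    refine (hint2.add (integrable_const 1)).mono'
      continuous_norm.aestronglyMeasurable ?_
    filter_upwards with ε
    simp only [Real.norm_eq_abs, abs_norm, Pi.add_apply]
    nlinarith [sq_nonneg (‖ε‖ - 1), norm_nonneg ε]
  set m : ℝ := ∫ ε, ‖ε‖ ∂Φ with hm
  have hm0 : 0 ≤ m := integral_nonneg fun ε => norm_nonneg ε
  -- Jensen: m² ≤ ∫ ‖ε‖²
  have hmsq : m ^ 2 ≤ ∫ ε, ‖ε‖ ^ 2 ∂Φ := by
    have hvn : 0 ≤ ∫ ε, (‖ε‖ - m) ^ 2 ∂Φ := integral_nonneg fun ε => sq_nonneg _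
    have hexp : ∫ ε, (‖ε‖ - m) ^ 2 ∂Φ = (∫ ε, ‖ε‖ ^ 2 ∂Φ) - m ^ 2 := by
      have : ∀ ε : EuclideanSpace ℝ (Fin d),
          (‖ε‖ - m) ^ 2 = ‖ε‖ ^ 2 - (2 * m) * ‖ε‖ + m ^ 2 := by intro ε; ring
      simp_rw [this]
      have hi1 : Integrable (fun ε : EuclideanSpace ℝ (Fin d) => ‖ε‖ ^ 2 - 2 * m * ‖ε‖) Φ :=
        hint2.sub (hn.const_mul (2 * m))
      rw [integral_add hi1 (integrable_const _),
        integral_sub hint2 (hn.const_mul (2 * m)), integral_const_mul, integral_const]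
      simp [← hm]
      ring
    linarith
  -- m ≤ σ √d
  have hmle : m ≤ σ * Real.sqrt d := by
    have h1 : m ^ 2 ≤ (σ * Real.sqrt d) ^ 2 := by
      rw [mul_pow, Real.sq_sqrt (Nat.cast_nonneg d)]
      calc m ^ 2 ≤ ∫ ε, ‖ε‖ ^ 2 ∂Φ := hmsq
        _ ≤ (d : ℝ) * σ ^ 2 := hvar
        _ = σ ^ 2 * d := by ring
    have h2 := Real.sqrt_le_sqrt h1
    rwa [Real.sqrt_sq hm0, Real.sqrt_sq (by positivity)] at h2
  -- gradient comparison
  have hgrad : ‖gradient J θ‖ ≤ ‖gradient JP θ‖ + L₂ * (σ * Real.sqrt d) := by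
    have hconst : gradient J θ = ∫ _ε, gradient J θ ∂Φ := by
      simp [integral_const]
    have hdiff : ‖gradient J θ - gradient JP θ‖ ≤ L₂ * m := by
      rw [hgradJP, hconst, ← integral_sub (integrable_const _) (hintg θ)]
      calc ‖∫ ε, (gradient J θ - gradient J (θ + ε)) ∂Φ‖
          ≤ ∫ ε, ‖gradient J θ - gradient J (θ + ε)‖ ∂Φ :=
            norm_integral_le_integral_norm _
        _ ≤ ∫ ε, L₂ * ‖ε‖ ∂Φ := by
            refine integral_mono ((integrable_const _).sub (hintg θ)).norm
              (hn.const_mul _) fun ε => ?_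
            have := hsmooth θ (θ + ε)
            simpa using this
        _ = L₂ * m := integral_const_mul _ _
    calc ‖gradient J θ‖ ≤ ‖gradient JP θ‖ + ‖gradient J θ - gradient JP θ‖ := by
          have := norm_sub_norm_le (gradient J θ) (gradient JP θ)
          linarith [abs_le.mp (abs_norm_sub_norm_le (gradient J θ) (gradient JP θ))]
      _ ≤ ‖gradient JP θ‖ + L₂ * m := by linarith
      _ ≤ _ := by nlinarith
  have := hwgd θ
  nlinarith [norm_nonneg (gradient JP θ)]
end

section
/- Let J : ℝ^d → ℝ be L₂-smooth and (α, β)-weak-gradient-dominated, with maximum J*. Let Φ have mean 0 and E[‖ε‖₂²] ≤ d σ², and set J_P(θ) = E_{ε∼Φ}[J(θ + ε)]. If additionally J is L_J-Lipschitz, then J_P satisfies weak gradient domination with respect to its own optimum: sup_θ J_P(θ) - J_P(θ) ≤ α ‖∇J_P(θ)‖₂ + β + (α L₂ + L_J) σ √d for every θ. -/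
open MeasureTheory

/-!
Smoothing moves both the value and the gradient of `J` by at most the Lipschitz constant times
`E‖ε‖ ≤ √(E‖ε‖²) ≤ σ √d`. Feeding the gradient bound into the weak gradient domination of `J` at
`θ`, and the value bound into `J* - J_P(θ) = (J* - J(θ)) + (J(θ) - J_P(θ))`, gives the claim,
because `J_P`, an average of values of `J ≤ J*`, has supremum at most `J*`.
-/

section Smoothing

variable {E : Type*} [NormedAddCommGroup E] [MeasurableSpace E] {μ : Measure E}

lemma memLp_two_norm_of_integrable_sq_norm [OpensMeasurableSpace E]
    (h : Integrable (fun x : E => ‖x‖ ^ 2) μ) : MemLp (fun x : E => ‖x‖) 2 μ :=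
  (memLp_two_iff_integrable_sq_norm continuous_norm.aestronglyMeasurable).2 (by simpa using h)

lemma integral_norm_le_sqrt_integral_sq_norm [OpensMeasurableSpace E] [IsProbabilityMeasure μ]
    (h : Integrable (fun x : E => ‖x‖ ^ 2) μ) :
    ∫ x, ‖x‖ ∂μ ≤ Real.sqrt (∫ x, ‖x‖ ^ 2 ∂μ) := by
  have hvar := ProbabilityTheory.variance_nonneg (fun x : E => ‖x‖) μ
  rw [ProbabilityTheory.variance_eq_sub (memLp_two_norm_of_integrable_sq_norm h)] at hvar
  exact Real.le_sqrt_of_sq_le (by simpa using hvar)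

lemma norm_integral_comp_add_sub_le [IsProbabilityMeasure μ]
    {F : Type*} [NormedAddCommGroup F] [NormedSpace ℝ F] [CompleteSpace F]
    {f : E → F} {L : ℝ} (hf : ∀ x y, ‖f x - f y‖ ≤ L * ‖x - y‖) (x : E)
    (hfx : Integrable (fun ε => f (x + ε)) μ) (hnorm : Integrable (fun ε : E => ‖ε‖) μ) :
    ‖(∫ ε, f (x + ε) ∂μ) - f x‖ ≤ L * ∫ ε, ‖ε‖ ∂μ := by
  have hsub : (∫ ε, f (x + ε) ∂μ) - f x = ∫ ε, (f (x + ε) - f x) ∂μ := by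
    rw [integral_sub hfx (integrable_const _), integral_const]
    simp
  rw [hsub, ← integral_const_mul]
  refine norm_integral_le_of_norm_le (hnorm.const_mul L) (Filter.Eventually.of_forall fun ε => ?_)
  simpa using hf (x + ε) x

end Smoothing

theorem stmt_12_general (d : ℕ) (α β L₂ LJ σ Jstar : ℝ) (hα : 0 < α)
    (hL₂ : 0 ≤ L₂) (hLJ : 0 ≤ LJ) (hσ : 0 < σ)
    (J JP : EuclideanSpace ℝ (Fin d) → ℝ)
    (hsup : ∀ θ, J θ ≤ Jstar)
    (hwgd : ∀ θ, Jstar - J θ ≤ α * ‖gradient J θ‖ + β)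
    (hLip : ∀ θ θ' : EuclideanSpace ℝ (Fin d), |J θ - J θ'| ≤ LJ * ‖θ - θ'‖)
    (hsmooth : ∀ θ θ' : EuclideanSpace ℝ (Fin d),
      ‖gradient J θ - gradient J θ'‖ ≤ L₂ * ‖θ - θ'‖)
    (Φ : Measure (EuclideanSpace ℝ (Fin d))) [IsProbabilityMeasure Φ]
    (hint2 : Integrable (fun ε => ‖ε‖ ^ 2) Φ)
    (hvar : (∫ ε, ‖ε‖ ^ 2 ∂Φ) ≤ (d : ℝ) * σ ^ 2)
    (hintJ : ∀ θ, Integrable (fun ε => J (θ + ε)) Φ)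
    (hintg : ∀ θ, Integrable (fun ε => gradient J (θ + ε)) Φ)
    (hJP : ∀ θ, JP θ = ∫ ε, J (θ + ε) ∂Φ)
    (hgradJP : ∀ θ, gradient JP θ = ∫ ε, gradient J (θ + ε) ∂Φ) :
    ∀ θ : EuclideanSpace ℝ (Fin d),
      (⨆ θ' : EuclideanSpace ℝ (Fin d), JP θ') - JP θ
        ≤ α * ‖gradient JP θ‖ + β + (α * L₂ + LJ) * σ * Real.sqrt d := by
  intro θ
  set m := ∫ ε, ‖ε‖ ∂Φ
  have hnorm := (memLp_two_norm_of_integrable_sq_norm hint2).integrable one_le_two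
  have hm : m ≤ σ * Real.sqrt d := calc
    m ≤ Real.sqrt (∫ ε, ‖ε‖ ^ 2 ∂Φ) := integral_norm_le_sqrt_integral_sq_norm hint2
    _ ≤ Real.sqrt (σ ^ 2 * d) := Real.sqrt_le_sqrt (by linarith)
    _ = σ * Real.sqrt d := by rw [Real.sqrt_mul (sq_nonneg σ), Real.sqrt_sq hσ.le]
  have hvalue : J θ - JP θ ≤ LJ * m := by
    have h := norm_integral_comp_add_sub_le (fun x y => (hLip x y).trans_eq' (Real.norm_eq_abs _))
      θ (hintJ θ) hnorm
    rw [← hJP, norm_sub_rev, Real.norm_eq_abs] at h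
    exact (le_abs_self _).trans h
  have hgrad : ‖gradient J θ‖ ≤ ‖gradient JP θ‖ + L₂ * m := by
    have h := norm_integral_comp_add_sub_le hsmooth θ (hintg θ) hnorm
    rw [← hgradJP, norm_sub_rev] at h
    linarith [norm_sub_norm_le (gradient J θ) (gradient JP θ)]
  have hsupJP : (⨆ θ', JP θ') ≤ Jstar := ciSup_le fun θ' => by
    rw [hJP]
    simpa using integral_mono (hintJ θ') (integrable_const Jstar) fun ε => hsup (θ' + ε)
  calc (⨆ θ', JP θ') - JP θ ≤ (Jstar - J θ) + (J θ - JP θ) := by linarith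
    _ ≤ α * (‖gradient JP θ‖ + L₂ * m) + β + LJ * m := by
      have := mul_le_mul_of_nonneg_left hgrad hα.le
      linarith [hwgd θ]
    _ ≤ α * ‖gradient JP θ‖ + β + (α * L₂ + LJ) * σ * Real.sqrt d := by
      have := mul_le_mul_of_nonneg_left hm (add_nonneg (mul_nonneg hα.le hL₂) hLJ)
      linarith

/-- If `J` is `L_J`-Lipschitz, `L₂`-smooth and `(α,β)`-weak-gradient-dominated, then the
smoothed objective `J_P(θ) = E_{ε∼Φ}[J(θ+ε)]` (zero-mean noise with `E[‖ε‖²] ≤ d σ²`)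
satisfies weak gradient domination with respect to its own supremum:
`sup J_P - J_P(θ) ≤ α ‖∇J_P(θ)‖ + β + (α L₂ + L_J) σ √d`. -/
theorem stmt_12 (d : ℕ) (α β L₂ LJ σ Jstar : ℝ) (hα : 0 < α) (hβ : 0 ≤ β)
    (hL₂ : 0 ≤ L₂) (hLJ : 0 ≤ LJ) (hσ : 0 < σ)
    (J JP : EuclideanSpace ℝ (Fin d) → ℝ)
    (hJ : ContDiff ℝ 2 J)
    (hsup : ∀ θ, J θ ≤ Jstar)
    (hwgd : ∀ θ, Jstar - J θ ≤ α * ‖gradient J θ‖ + β)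
    (hLip : ∀ θ θ' : EuclideanSpace ℝ (Fin d), |J θ - J θ'| ≤ LJ * ‖θ - θ'‖)
    (hsmooth : ∀ θ θ' : EuclideanSpace ℝ (Fin d),
      ‖gradient J θ - gradient J θ'‖ ≤ L₂ * ‖θ - θ'‖)
    (Φ : Measure (EuclideanSpace ℝ (Fin d))) [IsProbabilityMeasure Φ]
    (hmean : (∫ ε, ε ∂Φ) = 0)
    (hint2 : Integrable (fun ε => ‖ε‖ ^ 2) Φ)
    (hvar : (∫ ε, ‖ε‖ ^ 2 ∂Φ) ≤ (d : ℝ) * σ ^ 2)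
    (hintJ : ∀ θ, Integrable (fun ε => J (θ + ε)) Φ)
    (hintg : ∀ θ, Integrable (fun ε => gradient J (θ + ε)) Φ)
    (hJP : ∀ θ, JP θ = ∫ ε, J (θ + ε) ∂Φ)
    (hgradJP : ∀ θ, gradient JP θ = ∫ ε, gradient J (θ + ε) ∂Φ) :
    ∀ θ : EuclideanSpace ℝ (Fin d),
      (⨆ θ' : EuclideanSpace ℝ (Fin d), JP θ') - JP θ
        ≤ α * ‖gradient JP θ‖ + β + (α * L₂ + LJ) * σ * Real.sqrt d :=
  stmt_12_general d α β L₂ LJ σ Jstar hα hL₂ hLJ hσ J JP hsup hwgd hLip hsmooth Φ hint2 hvar hintJ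
    hintg hJP hgradJP
end

section
/- Consider the real recurrence ρ_{k+1} = ρ_k - (μζ/2)·max{0, ρ_k}² + C ζ² with constants μ > 0, ζ > 0, C ≥ 0, whose unique nonnegative fixed point is ρ̄ = √(2Cζ/μ). If ρ_0 > ρ̄ and ζ ≤ 1/(μ ρ_0), then for every k ≥ 0 it holds that ρ̄ ≤ ρ_{k+1} ≤ ρ_k, i.e. the sequence is nonincreasing and stays above the fixed point. -/
/-- For the recurrence `ρ_{k+1} = ρ_k - (μζ/2) max{0,ρ_k}² + Cζ²`, the unique nonnegative
fixed point is `ρ̄ = √(2Cζ/μ)`, and if `ρ_0 > ρ̄` and `ζ ≤ 1/(μρ_0)` then the sequence is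
nonincreasing and stays above the fixed point. -/
theorem stmt_13 (μ ζ C : ℝ) (hμ : 0 < μ) (hζ : 0 < ζ) (hC : 0 ≤ C)
    (ρ : ℕ → ℝ)
    (hrec : ∀ k : ℕ, ρ (k + 1) = ρ k - μ * ζ / 2 * (max 0 (ρ k)) ^ 2 + C * ζ ^ 2)
    (hρ0 : ρ 0 > Real.sqrt (2 * C * ζ / μ))
    (hstep : ζ ≤ 1 / (μ * ρ 0)) :
    (∀ x : ℝ, 0 ≤ x →
        ((x - μ * ζ / 2 * (max 0 x) ^ 2 + C * ζ ^ 2 = x) ↔ x = Real.sqrt (2 * C * ζ / μ))) ∧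
      ∀ k : ℕ, Real.sqrt (2 * C * ζ / μ) ≤ ρ (k + 1) ∧ ρ (k + 1) ≤ ρ k := by
  have hfrac : 0 ≤ 2 * C * ζ / μ := by positivity
  set s := Real.sqrt (2 * C * ζ / μ) with hs
  have hs0 : 0 ≤ s := Real.sqrt_nonneg _
  have hs2 : s ^ 2 = 2 * C * ζ / μ := Real.sq_sqrt hfrac
  have hs2' : μ * ζ / 2 * s ^ 2 = C * ζ ^ 2 := by
    rw [hs2]; field_simp
  have hρ0pos : 0 < ρ 0 := lt_of_le_of_lt hs0 hρ0
  have hρ0le : ρ 0 * (μ * ζ) ≤ 1 := by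
    rw [le_div_iff₀ (by positivity)] at hstep
    nlinarith
  constructor
  · intro x hx
    rw [max_eq_right hx]
    constructor
    · intro h
      have hx2 : x ^ 2 = 2 * C * ζ / μ := by
        field_simp at h ⊢
        nlinarith
      rw [hs, ← hx2, Real.sqrt_sq hx]
    · intro h
      subst h
      linarith [hs2']
  · have main : ∀ k, s ≤ ρ k ∧ ρ k ≤ ρ 0 := by
      intro k
      induction k with
      | zero => exact ⟨le_of_lt hρ0, le_refl _⟩
      | succ n ih =>
        obtain ⟨h1, h2⟩ := ih
        have hρn0 : 0 ≤ ρ n := le_trans hs0 h1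
        have hmax : max 0 (ρ n) = ρ n := max_eq_right hρn0
        have hlim : ρ n * (μ * ζ) ≤ 1 := by nlinarith
        have hslim : s * (μ * ζ) ≤ 1 := by nlinarith
        have hle : ρ (n + 1) ≤ ρ n := by
          rw [hrec n, hmax]
          nlinarith [mul_nonneg (mul_nonneg hμ.le hζ.le) (mul_nonneg (sub_nonneg.2 h1) (add_nonneg hs0 hρn0))]
        have hge : s ≤ ρ (n + 1) := by
          rw [hrec n, hmax]
          nlinarith [mul_nonneg (sub_nonneg.2 h1) (sub_nonneg.2 hlim),
            mul_nonneg (sub_nonneg.2 h1) (sub_nonneg.2 hslim)]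
        exact ⟨hge, le_trans hle h2⟩
    intro k
    obtain ⟨h1, h2⟩ := main k
    have hρk0 : 0 ≤ ρ k := le_trans hs0 h1
    have hmax : max 0 (ρ k) = ρ k := max_eq_right hρk0
    have hle : ρ (k + 1) ≤ ρ k := by
      rw [hrec k, hmax]
      nlinarith [mul_nonneg (mul_nonneg hμ.le hζ.le) (mul_nonneg (sub_nonneg.2 h1) (add_nonneg hs0 hρk0))]
    exact ⟨(main (k + 1)).1, hle⟩
end

section
/- Consider two real sequences: ρ_{k+1} = ρ_k - (μζ/2)·max{0, ρ_k}² + Cζ² and η_{k+1} = (1 - μζρ̄/2) η_k + Cζ², with common initial value ρ_0 = η_0 = r_0, where μ, ζ > 0, C ≥ 0 and ρ̄ = √(2Cζ/μ). If r_0 > ρ̄ and ζ ≤ 1/(μ r_0), then η_k ≥ ρ_k for every k ≥ 0. -/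
/-- The linearized sequence `η_{k+1} = (1 - μζρ̄/2) η_k + Cζ²` dominates the sequence
`ρ_{k+1} = ρ_k - (μζ/2) max{0,ρ_k}² + Cζ²` when both start from `r_0 > ρ̄ = √(2Cζ/μ)`
and `ζ ≤ 1/(μ r_0)`. -/
theorem stmt_14 (μ ζ C r₀ : ℝ) (hμ : 0 < μ) (hζ : 0 < ζ) (hC : 0 ≤ C)
    (ρ η : ℕ → ℝ)
    (hρ0 : ρ 0 = r₀) (hη0 : η 0 = r₀)
    (hρ : ∀ k : ℕ, ρ (k + 1) = ρ k - μ * ζ / 2 * (max 0 (ρ k)) ^ 2 + C * ζ ^ 2)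
    (hη : ∀ k : ℕ,
      η (k + 1) = (1 - μ * ζ * Real.sqrt (2 * C * ζ / μ) / 2) * η k + C * ζ ^ 2)
    (hr0 : r₀ > Real.sqrt (2 * C * ζ / μ))
    (hstep : ζ ≤ 1 / (μ * r₀)) :
    ∀ k : ℕ, η k ≥ ρ k := by
  set b := Real.sqrt (2 * C * ζ / μ) with hb
  have hb0 : 0 ≤ b := Real.sqrt_nonneg _
  have hbsq : b ^ 2 = 2 * C * ζ / μ := by
    rw [hb, sq, Real.mul_self_sqrt]; positivity
  have hbsq' : μ * b ^ 2 = 2 * C * ζ := by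
    rw [hbsq]; field_simp
  have hr0pos : 0 < r₀ := lt_of_le_of_lt hb0 hr0
  have hζr : μ * ζ * r₀ ≤ 1 := by
    have h := (le_div_iff₀ (by positivity : (0:ℝ) < μ * r₀)).mp hstep
    nlinarith
  have key : ∀ k, b ≤ ρ k ∧ ρ k ≤ r₀ := by
    intro k; induction k with
    | zero => rw [hρ0]; exact ⟨le_of_lt hr0, le_refl _⟩
    | succ k ih =>
      obtain ⟨h1, h2⟩ := ih
      have hmax : max 0 (ρ k) = ρ k := max_eq_right (hb0.trans h1)
      rw [hρ k, hmax]
      constructor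
      · nlinarith [mul_nonneg (sub_nonneg.mpr h1)
          (by nlinarith : (0:ℝ) ≤ 1 - μ * ζ / 2 * (ρ k + b))]
      · nlinarith [mul_nonneg (mul_nonneg hζ.le (sub_nonneg.mpr h1))
          (by linarith : (0:ℝ) ≤ ρ k + b)]
  intro k; induction k with
  | zero => rw [hρ0, hη0]
  | succ k ih =>
    obtain ⟨h1, h2⟩ := key k
    have hmax : max 0 (ρ k) = ρ k := max_eq_right (hb0.trans h1)
    rw [hρ k, hη k, hmax]
    have hcoef : (0:ℝ) ≤ 1 - μ * ζ * b / 2 := by nlinarith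
    nlinarith [mul_nonneg hcoef (sub_nonneg.mpr ih),
      mul_nonneg (mul_nonneg (hb0.trans h1) (sub_nonneg.mpr h1)) (mul_nonneg hμ.le hζ.le)]
end
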